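/- Let R be a ring spectrum with an augmentation R → k to a field k which is surjective on homotopy, with 'augmentation ideal' I defined by the triangle I → R → k, and suppose R_* is graded coherent. Then the following are equivalent: (1) k is cohomologically locally finitely presented in D(R) (with respect to D^c(R)); (2) k is a finitely presented R_*-module; (3) I_* = ker(R_* → k) is a finitely generated R_*-module. -/

import Mathlib

/-!
We model the derived category `D(R)` of a ring spectrum `R` as a pretriangulated
category, with `R` (respectively `k`) specified as distinguished objects.
`FinBuilds X Y` says that `Y` lies in the thick subcategory generated by `X`;
in particular `FinBuilds R M` says that `M` is a small (= compact = perfect)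
`R`-module, so `D^c(R)` is the class `FinBuilds R`.  Homotopy groups are
modelled via the graded hom groups `π_* M = ⊕ᵢ [R, Σⁱ M]`, with the coefficient
ring `R_*` packaged (with its grading suppressed) in `GradedHomData`.
-/

open CategoryTheory Limits Pretriangulated

universe v u

section Triangulated

variable (C : Type u) [Category.{v} C] [HasZeroObject C] [Preadditive C]
  [HasShift C ℤ] [∀ n : ℤ, (shiftFunctor C n).Additive] [Pretriangulated C]

/-- A class of objects of a pretriangulated category is thick if it is closed
under isomorphisms, shifts, retracts (direct summands) and cones. -/
def IsThickClass (P : C → Prop) : Prop :=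
  (∀ (X Y : C), (X ≅ Y) → P X → P Y) ∧
  (∀ (n : ℤ) (X : C), P X → P (X⟦n⟧)) ∧
  (∀ (X Y : C), (∃ (s : X ⟶ Y) (r : Y ⟶ X), s ≫ r = 𝟙 X) → P Y → P X) ∧
  (∀ (T : Triangle C), T ∈ (distTriang C) → P T.obj₁ → P T.obj₂ → P T.obj₃)

/-- `FinBuilds X Y` : `Y` lies in the thick subcategory generated by `X`. -/
def FinBuilds (X Y : C) : Prop := ∀ P : C → Prop, IsThickClass C P → P X → P Y

/-- `X` is a retract (direct summand) of `Y`. -/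
def IsRetractOf (X Y : C) : Prop := ∃ (s : X ⟶ Y) (r : Y ⟶ X), s ≫ r = 𝟙 X

variable [HasFiniteBiproducts C]

/-- `⟨g⟩₁` : retracts of finite direct sums of (de)suspensions of `g`. -/
def GenOne (g X : C) : Prop :=
  ∃ (n : ℕ) (f : Fin n → ℤ), IsRetractOf C X (⨁ fun i : Fin n => g⟦f i⟧)

/-- `⟨g⟩_{n+1}` consists of the retracts of extensions of an object of `⟨g⟩₁`
by an object of `⟨g⟩ₙ`. -/
def GenLe (g : C) : ℕ → C → Prop
  | 0, X => GenOne C g X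
  | n + 1, X => GenLe g n X ∨
      ∃ T : Triangle C, T ∈ (distTriang C) ∧ GenLe g n T.obj₁ ∧ GenOne C g T.obj₃ ∧
        IsRetractOf C X T.obj₂

/-- A class of objects (viewed as a full triangulated subcategory) is strongly
generated if some object `g` of the class generates it in a bounded number of
steps: `K = ⟨g⟩ₙ` for some `n`. -/
def StronglyGeneratedClass (P : C → Prop) : Prop :=
  ∃ g : C, P g ∧ ∃ n : ℕ, ∀ X : C, P X → GenLe C g n X

end Triangulated

section LFP

variable (C : Type u) [Category.{v} C] [Preadditive C] [HasShift C ℤ]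

/-- Object-level formulation (via Yoneda on the full subcategory of objects
satisfying `P`) of: "the restriction of `Hom(−, X)` to the subcategory `P` is
a locally finitely generated functor": for every `c` in `P` there is an `l` in
`P` and a natural map `Hom(−,l) → Hom(−,X)` (i.e. a morphism `l → X`) which is
surjective on all shifts of `c`. -/
def CLFG (P : C → Prop) (X : C) : Prop :=
  ∀ c : C, P c → ∃ (l : C) (_ : P l) (u : l ⟶ X),
    ∀ (i : ℤ) (v : (c⟦i⟧ : C) ⟶ X), ∃ w : (c⟦i⟧ : C) ⟶ l, w ≫ u = v

/-- Object-level formulation (via Yoneda on the full subcategory of objects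
satisfying `P`) of: "the restriction of `Hom(−, X)` to the subcategory `P` is
a locally finitely presented functor": it is locally finitely generated and the
kernel (in the functor category) of every natural map `Hom(−,m) → Hom(−,X)`
from a representable is again locally finitely generated.  When `P` is the
class of small objects of `D(R)`, this says exactly that `X` is
cohomologically locally finitely presented, i.e. `X ∈ D^lfp(R)`. -/
def CLFP (P : C → Prop) (X : C) : Prop :=
  CLFG C P X ∧
  ∀ (m : C), P m → ∀ u : m ⟶ X, ∀ c : C, P c →
    ∃ (l : C) (_ : P l) (w : l ⟶ m), w ≫ u = 0 ∧
      ∀ (i : ℤ) (v : (c⟦i⟧ : C) ⟶ m), v ≫ u = 0 → ∃ t : (c⟦i⟧ : C) ⟶ l, t ≫ w = v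

/-- Underlying data for the graded endomorphism ring `K^*(g,g) = ⊕ᵢ K(g, Σⁱ g)`
of an object `g`, and the graded modules `K^*(g,m) = ⊕ᵢ K(g, Σⁱ m)` over it.
The ring `Λ` models `K^*(g,g)` (grading suppressed); its underlying additive
group is the direct sum of the shifted hom-groups. -/
structure GradedHomData₀ (g : C) where
  Λ : Type v
  ringΛ : Ring Λ
  eΛ : Λ ≃+ DirectSum ℤ (fun i => g ⟶ (g⟦i⟧))
  mod : ∀ m : C, Module Λ (DirectSum ℤ (fun i => g ⟶ (m⟦i⟧)))

attribute [instance] GradedHomData₀.ringΛ GradedHomData₀.mod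

/-- `K^*(g,m) = ⊕ᵢ K(g, Σⁱ m)`; for `g = R` in `D(R)` this is `π_* M = M_*`. -/
abbrev piSt (g m : C) := DirectSum ℤ (fun i => g ⟶ (m⟦i⟧))

/-- Graded endomorphism ring data: the module structure on `K^*(g,m)` is given
by composition, and the multiplicative unit of `Λ` is the identity of `g`. -/
structure GradedHomData (g : C) extends GradedHomData₀ C g where
  comp_smul_of : ∀ (m : C) (i j : ℤ) (f : g ⟶ (g⟦i⟧)) (x : g ⟶ (m⟦j⟧)),
    eΛ.symm (DirectSum.of (fun n => g ⟶ (g⟦n⟧)) i f) •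
        DirectSum.of (fun n => g ⟶ (m⟦n⟧)) j x
      = DirectSum.of (fun n => g ⟶ (m⟦n⟧)) (j + i)
          (f ≫ (x⟦i⟧') ≫ (shiftFunctorAdd C j i).inv.app m)
  one_def : eΛ 1 = DirectSum.of (fun n => g ⟶ (g⟦n⟧)) 0 ((shiftFunctorZero C ℤ).inv.app g)

end LFP

/-- A finitely presented module (gradings suppressed). -/
def IsFPModule (R : Type*) (M : Type*) [Ring R] [AddCommGroup M] [Module R M] : Prop :=
  ∃ (n : ℕ) (f : (Fin n → R) →ₗ[R] M), Function.Surjective f ∧ (LinearMap.ker f).FG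

/-- A coherent ring: every finitely generated (left) ideal is finitely
presented (gradings suppressed). -/
def IsCoherentRing (R : Type*) [Ring R] : Prop :=
  ∀ I : Submodule R R, I.FG → IsFPModule R I

/-!
Over a coherent ring, finitely presented modules have the two-out-of-three property along the
five-term exact sequences that distinguished triangles induce on `π_*`, so the objects with
finitely presented homotopy form a thick subcategory containing `R`; in particular small
objects have finitely presented homotopy.

If `π_* k` is finitely presented, the objects `c` such that, for every `X` with finitely presented
homotopy, all maps from shifts of `c` to `X` factor through a single small object over `X`,
form a thick subcategory. It contains `R` because finitely many generators of `π_* X` are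
realised by a map from a finite sum of shifts of `R`; closure under cones uses that the fibre
of a map from a small object to `X` again has finitely presented homotopy. Applied to `k` this
gives (2) ⇒ (1). Conversely, a small cover `l → k` that is surjective on `π_*`, together with a
small cover `l' → l` of its kernel, exhibits `π_* k` as the cokernel of `π_* l' → π_* l`, a map of
finitely presented modules. Finally (2) ⇔ (3) is the usual criterion for the cyclic module
`R_*/I_*` to be finitely presented.
-/

section Coherent

variable {Λ : Type*} [Ring Λ]

theorem isFPModule_iff_finitePresentation {M : Type*} [AddCommGroup M] [Module Λ M] :
    IsFPModule Λ M ↔ Module.FinitePresentation Λ M := by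
  refine ⟨fun ⟨_, f, hf, hker⟩ => Module.finitePresentation_of_surjective f hf hker, fun _ => ?_⟩
  obtain ⟨n, f, hf⟩ := Module.Finite.exists_fin' Λ M
  exact ⟨n, f, hf, Module.FinitePresentation.fg_ker f hf⟩

theorem Module.FinitePresentation.of_retract {M N : Type*} [AddCommGroup M] [Module Λ M]
    [AddCommGroup N] [Module Λ N] [Module.FinitePresentation Λ M]
    (s : N →ₗ[Λ] M) (r : M →ₗ[Λ] N) (hrs : r ∘ₗ s = LinearMap.id) :
    Module.FinitePresentation Λ N := by
  have hr : Function.Surjective r := fun y => ⟨s y, LinearMap.congr_fun hrs y⟩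
  refine Module.finitePresentation_of_surjective r hr ?_
  suffices LinearMap.ker r = LinearMap.range (LinearMap.id - s ∘ₗ r) from
    this ▸ Submodule.fg_range _
  ext x
  refine ⟨fun hx => ⟨x, by simp [LinearMap.mem_ker.mp hx]⟩, ?_⟩
  rintro ⟨y, rfl⟩
  simp [← LinearMap.comp_apply (f := r) (g := s), hrs]

namespace IsCoherentRing

variable (hΛ : IsCoherentRing Λ)
include hΛ

theorem finitePresentation_of_fg_submodule_pi :
    ∀ (n : ℕ) (N : Submodule Λ (Fin n → Λ)), N.FG → Module.FinitePresentation Λ N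
  | 0, _, _ => inferInstance
  | n + 1, N, hN => by
    have : Module.Finite Λ N := Module.Finite.iff_fg.mpr hN
    let φ : N →ₗ[Λ] Λ := LinearMap.proj 0 ∘ₗ N.subtype
    have : Module.FinitePresentation Λ (LinearMap.range φ) := by
      refine isFPModule_iff_finitePresentation.mp (hΛ _ ?_)
      rw [LinearMap.range_comp, Submodule.range_subtype]
      exact hN.map _
    have hker : (LinearMap.ker φ).FG := by
      simpa using Module.FinitePresentation.fg_ker _ φ.surjective_rangeRestrict
    -- On `ker φ` the first coordinate vanishes, so dropping it is injective.
    let τ : LinearMap.ker φ →ₗ[Λ] (Fin n → Λ) :=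
      LinearMap.funLeft Λ Λ Fin.succ ∘ₗ N.subtype ∘ₗ (LinearMap.ker φ).subtype
    have hτ : Function.Injective τ := by
      intro x y hxy
      have h0 : ((x : N) : Fin (n + 1) → Λ) 0 = ((y : N) : Fin (n + 1) → Λ) 0 :=
        (LinearMap.mem_ker.mp x.2).trans (LinearMap.mem_ker.mp y.2).symm
      ext1; ext1
      exact funext (Fin.cases h0 fun j => congr_fun hxy j)
    have : Module.FinitePresentation Λ (LinearMap.ker φ) := by
      have := finitePresentation_of_fg_submodule_pi n (LinearMap.range τ)
        (by rw [LinearMap.range_eq_map]; exact (Module.Finite.iff_fg.mpr hker).fg_top.map τ)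
      exact .of_equiv (M := LinearMap.range τ) (N := LinearMap.ker φ)
        (LinearEquiv.ofInjective τ hτ).symm
    have : Module.FinitePresentation Λ (LinearMap.ker φ.rangeRestrict) := by
      rwa [LinearMap.ker_rangeRestrict]
    exact Module.finitePresentation_of_ker φ.rangeRestrict φ.surjective_rangeRestrict

theorem finitePresentation_of_fg {M : Type*} [AddCommGroup M] [Module Λ M]
    [Module.FinitePresentation Λ M] (N : Submodule Λ M) (hN : N.FG) :
    Module.FinitePresentation Λ N := by
  obtain ⟨n, q, hq⟩ := Module.Finite.exists_fin' Λ M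
  have hkerq : (LinearMap.ker q).FG := Module.FinitePresentation.fg_ker q hq
  have hle : LinearMap.ker q ≤ N.comap q := LinearMap.ker_le_comap q
  have hN' : (N.comap q).FG := by
    refine Submodule.fg_of_fg_map_of_fg_inf_ker q ?_ ?_
    · rwa [Submodule.map_comap_eq_of_surjective hq]
    · rwa [inf_eq_right.mpr hle]
  have := hΛ.finitePresentation_of_fg_submodule_pi n _ hN'
  let qN : N.comap q →ₗ[Λ] N := q.restrict fun _ hx => hx
  have hqN : Function.Surjective qN := by
    rintro ⟨y, hy⟩
    obtain ⟨x, rfl⟩ := hq y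
    exact ⟨⟨x, hy⟩, rfl⟩
  refine Module.finitePresentation_of_surjective qN hqN ?_
  have hker : LinearMap.ker qN = (LinearMap.ker q).comap (N.comap q).subtype := by
    ext x
    simp [qN, Subtype.ext_iff]
  rw [hker]
  refine Submodule.fg_of_fg_map_injective _ (N.comap q).injective_subtype ?_
  rwa [Submodule.map_comap_subtype, inf_eq_right.mpr hle]

theorem fg_ker {M N : Type*} [AddCommGroup M] [Module Λ M] [AddCommGroup N] [Module Λ N]
    [Module.FinitePresentation Λ M] [Module.FinitePresentation Λ N] (f : M →ₗ[Λ] N) :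
    (LinearMap.ker f).FG := by
  have := hΛ.finitePresentation_of_fg _ (Submodule.fg_range f)
  simpa using Module.FinitePresentation.fg_ker _ f.surjective_rangeRestrict

theorem finitePresentation_of_exact {A B M D E : Type*}
    [AddCommGroup A] [Module Λ A] [AddCommGroup B] [Module Λ B] [AddCommGroup M] [Module Λ M]
    [AddCommGroup D] [Module Λ D] [AddCommGroup E] [Module Λ E]
    [Module.Finite Λ A] [Module.FinitePresentation Λ B]
    [Module.FinitePresentation Λ D] [Module.FinitePresentation Λ E]
    {α : A →ₗ[Λ] B} {β : B →ₗ[Λ] M} {γ : M →ₗ[Λ] D} {δ : D →ₗ[Λ] E}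
    (hαβ : Function.Exact α β) (hβγ : Function.Exact β γ) (hγδ : Function.Exact γ δ) :
    Module.FinitePresentation Λ M := by
  have : Module.FinitePresentation Λ (LinearMap.range γ) := by
    refine hΛ.finitePresentation_of_fg _ ?_
    rw [← LinearMap.exact_iff.mp hγδ]
    exact hΛ.fg_ker δ
  have : Module.FinitePresentation Λ (LinearMap.range β) := by
    refine Module.finitePresentation_of_surjective β.rangeRestrict β.surjective_rangeRestrict ?_
    rw [LinearMap.ker_rangeRestrict, LinearMap.exact_iff.mp hαβ]
    exact Submodule.fg_range α
  have : Module.FinitePresentation Λ (LinearMap.ker γ.rangeRestrict) := by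
    rw [LinearMap.ker_rangeRestrict, LinearMap.exact_iff.mp hβγ]
    infer_instance
  exact Module.finitePresentation_of_ker γ.rangeRestrict γ.surjective_rangeRestrict

end IsCoherentRing

end Coherent

section ShiftHomEquiv

variable {C : Type u} [Category.{v} C] [HasShift C ℤ]

def shiftHomEquiv (i : ℤ) (A B : C) : (A⟦i⟧ ⟶ B) ≃ (A ⟶ B⟦-i⟧) :=
  (shiftEquiv C i).toAdjunction.homEquiv A B

theorem shiftHomEquiv_comp {i : ℤ} {A B B' : C} (f : A⟦i⟧ ⟶ B) (h : B ⟶ B') :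
    shiftHomEquiv i A B' (f ≫ h) = shiftHomEquiv i A B f ≫ h⟦-i⟧' :=
  Adjunction.homEquiv_naturality_right _ _ _

theorem shiftHomEquiv_shift_comp {i : ℤ} {A' A B : C} (f : A' ⟶ A) (h : A⟦i⟧ ⟶ B) :
    shiftHomEquiv i A' B (f⟦i⟧' ≫ h) = f ≫ shiftHomEquiv i A B h :=
  Adjunction.homEquiv_naturality_left _ _ _

theorem shiftHomEquiv_zero [Preadditive C] [∀ n : ℤ, (shiftFunctor C n).Additive] (i : ℤ)
    (A B : C) : shiftHomEquiv i A B 0 = 0 := by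
  simpa using shiftHomEquiv_comp (i := i) (0 : A⟦i⟧ ⟶ B) (0 : B ⟶ B)

end ShiftHomEquiv

section TriangleShift

variable {C : Type u} [Category.{v} C] [HasZeroObject C] [Preadditive C]
  [HasShift C ℤ] [∀ n : ℤ, (CategoryTheory.shiftFunctor C n).Additive] [Pretriangulated C]
  (T : Triangle C) (hT : T ∈ distTriang C)
include hT

theorem CategoryTheory.Pretriangulated.Triangle.yoneda_exact₂_shift (i : ℤ) {X : C}
    (f : T.obj₂⟦i⟧ ⟶ X) (hf : T.mor₁⟦i⟧' ≫ f = 0) :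
    ∃ f' : T.obj₃⟦i⟧ ⟶ X, f = T.mor₂⟦i⟧' ≫ f' := by
  obtain ⟨f', hf'⟩ := T.yoneda_exact₂ hT (shiftHomEquiv i _ _ f)
    (by rw [← shiftHomEquiv_shift_comp, hf, shiftHomEquiv_zero])
  refine ⟨(shiftHomEquiv i _ _).symm f', (shiftHomEquiv i _ _).injective ?_⟩
  rw [shiftHomEquiv_shift_comp, Equiv.apply_symm_apply, hf']

theorem CategoryTheory.Pretriangulated.Triangle.yoneda_exact₃_shift (i : ℤ) {X : C}
    (f : T.obj₃⟦i⟧ ⟶ X) (hf : T.mor₂⟦i⟧' ≫ f = 0) :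
    ∃ f' : T.obj₁⟦(1 : ℤ)⟧⟦i⟧ ⟶ X, f = T.mor₃⟦i⟧' ≫ f' :=
  T.rotate.yoneda_exact₂_shift (rot_of_distTriang _ hT) i f hf

end TriangleShift

section SurjOnShifts

variable {C : Type u} [Category.{v} C] [HasShift C ℤ]

def IsSurjOnShifts (c : C) {l X : C} (u : l ⟶ X) : Prop :=
  ∀ (i : ℤ) (v : c⟦i⟧ ⟶ X), ∃ w : c⟦i⟧ ⟶ l, w ≫ u = v

variable {l X : C} {u : l ⟶ X}

theorem IsSurjOnShifts.of_retract {c c' : C} (s : c ⟶ c') (r : c' ⟶ c) (hsr : s ≫ r = 𝟙 c)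
    (h : IsSurjOnShifts c' u) : IsSurjOnShifts c u := fun i v => by
  obtain ⟨w, hw⟩ := h i (r⟦i⟧' ≫ v)
  exact ⟨s⟦i⟧' ≫ w, by rw [Category.assoc, hw, ← Category.assoc, ← Functor.map_comp, hsr,
    CategoryTheory.Functor.map_id, Category.id_comp]⟩

theorem IsSurjOnShifts.shift {c : C} (h : IsSurjOnShifts c u) (n : ℤ) :
    IsSurjOnShifts (c⟦n⟧) u := fun i v => by
  obtain ⟨w, hw⟩ := h (n + i) ((shiftFunctorAdd C n i).hom.app c ≫ v)
  exact ⟨(shiftFunctorAdd C n i).inv.app c ≫ w, by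
    rw [Category.assoc, hw, Iso.inv_hom_id_app_assoc]⟩

end SurjOnShifts

section FinBuilds

variable {C : Type u} [Category.{v} C] [HasZeroObject C] [Preadditive C]
  [HasShift C ℤ] [∀ n : ℤ, (shiftFunctor C n).Additive] [Pretriangulated C]

theorem finBuilds_self (X : C) : FinBuilds C X X := fun _ _ h => h

theorem isThickClass_finBuilds (X : C) : IsThickClass C (FinBuilds C X) :=
  ⟨fun Y Z e h P hP hX => hP.1 Y Z e (h P hP hX),
   fun n Y h P hP hX => hP.2.1 n Y (h P hP hX),
   fun Y Z r h P hP hX => hP.2.2.1 Y Z r (h P hP hX),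
   fun T hT h₁ h₂ P hP hX => hP.2.2.2 T hT (h₁ P hP hX) (h₂ P hP hX)⟩

variable {X : C}

theorem FinBuilds.shift {Y : C} (h : FinBuilds C X Y) (n : ℤ) : FinBuilds C X (Y⟦n⟧) :=
  (isThickClass_finBuilds X).2.1 n Y h

theorem FinBuilds.of_distTriang {T : Triangle C} (hT : T ∈ distTriang C)
    (h₁ : FinBuilds C X T.obj₁) (h₂ : FinBuilds C X T.obj₂) : FinBuilds C X T.obj₃ :=
  (isThickClass_finBuilds X).2.2.2 T hT h₁ h₂

theorem FinBuilds.biprod {Y Z : C} (hY : FinBuilds C X Y) (hZ : FinBuilds C X Z) :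
    FinBuilds C X (Y ⊞ Z) :=
  .of_distTriang (inv_rot_of_distTriang _ (binaryBiproductTriangle_distinguished Y Z))
    (hZ.shift _) hY

end FinBuilds

section PiSt

variable {C : Type u} [Category.{v} C] [Preadditive C] [HasShift C ℤ] {g : C}

abbrev piSt.of (X : C) (j : ℤ) (x : g ⟶ X⟦j⟧) : piSt C g X :=
  DirectSum.of (fun n => g ⟶ X⟦n⟧) j x

theorem piSt.of_comp_shiftFunctorAdd'_inv {X : C} {a b m m' : ℤ} (h : a + b = m)
    (h' : a + b = m') (y : g ⟶ X⟦a⟧⟦b⟧) :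
    DirectSum.of (fun n => g ⟶ X⟦n⟧) m (y ≫ (shiftFunctorAdd' C a b m h).inv.app X) =
      DirectSum.of (fun n => g ⟶ X⟦n⟧) m' (y ≫ (shiftFunctorAdd' C a b m' h').inv.app X) := by
  obtain rfl := h.symm.trans h'
  rfl

theorem piSt.of_comp_shiftFunctorAdd'_inv_hom {X : C} {a b b' m : ℤ} (h : a + b = m)
    (h' : a + b' = m) (y : g ⟶ X⟦a⟧⟦b⟧) :
    piSt.of (X⟦a⟧) b' (y ≫ (shiftFunctorAdd' C a b m h).inv.app X ≫
      (shiftFunctorAdd' C a b' m h').hom.app X) = piSt.of (X⟦a⟧) b y := by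
  obtain rfl : b = b' := by omega
  simp

theorem piSt.of_comp_shiftFunctorAdd'_hom_inv {X : C} {a b m m' : ℤ} (h : a + b = m)
    (h' : a + b = m') (y : g ⟶ X⟦m⟧) :
    piSt.of X m' (y ≫ (shiftFunctorAdd' C a b m h).hom.app X ≫
      (shiftFunctorAdd' C a b m' h').inv.app X) = piSt.of X m y := by
  obtain rfl := h.symm.trans h'
  simp

end PiSt

namespace GradedHomData

section

variable {C : Type u} [Category.{v} C] [Preadditive C] [HasShift C ℤ] {g : C}
  (Γ : GradedHomData C g)

def mkLinearMap {X Y : C} (F : piSt C g X →+ piSt C g Y)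
    (hF : ∀ (i j : ℤ) (f : g ⟶ g⟦i⟧) (x : g ⟶ X⟦j⟧),
      F (Γ.eΛ.symm (piSt.of g i f) • piSt.of X j x) =
        Γ.eΛ.symm (piSt.of g i f) • F (piSt.of X j x)) :
    piSt C g X →ₗ[Γ.Λ] piSt C g Y where
  toFun := F
  map_add' := F.map_add
  map_smul' c ξ := by
    obtain ⟨μ, rfl⟩ := Γ.eΛ.symm.surjective c
    induction ξ using DirectSum.induction_on with
    | zero => simp
    | of j x =>
      induction μ using DirectSum.induction_on with
      | zero => simp
      | of i f => exact hF i j f x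
      | add μ₁ μ₂ h₁ h₂ => simp [add_smul, h₁, h₂]
    | add ξ₁ ξ₂ h₁ h₂ => simp [smul_add, h₁, h₂]

def map {X Y : C} (φ : X ⟶ Y) : piSt C g X →ₗ[Γ.Λ] piSt C g Y :=
  Γ.mkLinearMap (DirectSum.map fun j => Preadditive.rightComp g (φ⟦j⟧')) fun i j f x => by
    simp only [DirectSum.map_of, Γ.comp_smul_of]
    congr 1
    change (f ≫ x⟦i⟧' ≫ _) ≫ φ⟦j + i⟧' = f ≫ (x ≫ φ⟦j⟧')⟦i⟧' ≫ _
    simp only [Category.assoc, Functor.map_comp, ← (shiftFunctorAdd C j i).inv.naturality φ]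
    rfl

@[simp]
theorem map_apply {X Y : C} (φ : X ⟶ Y) (ξ : piSt C g X) (j : ℤ) :
    Γ.map φ ξ j = ξ j ≫ φ⟦j⟧' :=
  rfl

theorem map_of {X Y : C} (φ : X ⟶ Y) (j : ℤ) (x : g ⟶ X⟦j⟧) :
    Γ.map φ (piSt.of X j x) = piSt.of Y j (x ≫ φ⟦j⟧') :=
  DirectSum.map_of _ _ _

theorem map_id (X : C) : Γ.map (𝟙 X) = LinearMap.id := by
  ext ξ j
  simp

theorem map_comp {X Y Z : C} (φ : X ⟶ Y) (ψ : Y ⟶ Z) :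
    Γ.map (φ ≫ ψ) = Γ.map ψ ∘ₗ Γ.map φ := by
  ext ξ j
  simp

theorem map_zero [∀ n : ℤ, (shiftFunctor C n).Additive] (X Y : C) :
    Γ.map (0 : X ⟶ Y) = 0 := by
  ext ξ j
  simp

def shiftEquiv (n : ℤ) (X : C) :
    piSt C g (X⟦n⟧) ≃ₗ[Γ.Λ] piSt C g X where
  __ := Γ.mkLinearMap (DirectSum.toAddMonoid fun j => (DirectSum.of _ (n + j)).comp
      (Preadditive.rightComp g ((shiftFunctorAdd' C n j (n + j) rfl).inv.app X)))
    fun i j f x => by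
      simp only [DirectSum.toAddMonoid_of, AddMonoidHom.comp_apply, Preadditive.rightComp,
        AddMonoidHom.mk'_apply, Γ.comp_smul_of, ← shiftFunctorAdd'_eq_shiftFunctorAdd]
      rw [piSt.of_comp_shiftFunctorAdd'_inv _ (add_assoc n j i).symm]
      simp [shiftFunctorAdd'_assoc_inv_app]
  invFun := DirectSum.toAddMonoid fun m => (DirectSum.of _ (m - n)).comp
      (Preadditive.rightComp g ((shiftFunctorAdd' C n (m - n) m (by omega)).hom.app X))
  left_inv ξ := by
    induction ξ using DirectSum.induction_on with
    | zero => simp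
    | of j x =>
      change DirectSum.toAddMonoid _ (DirectSum.toAddMonoid _ (piSt.of _ j x)) = _
      simp only [DirectSum.toAddMonoid_of, AddMonoidHom.comp_apply, Preadditive.rightComp,
        AddMonoidHom.mk'_apply, Category.assoc]
      exact piSt.of_comp_shiftFunctorAdd'_inv_hom _ _ x
    | add ξ₁ ξ₂ h₁ h₂ => simp_all
  right_inv ξ := by
    induction ξ using DirectSum.induction_on with
    | zero => simp
    | of m y =>
      change DirectSum.toAddMonoid _ (DirectSum.toAddMonoid _ (piSt.of _ m y)) = _
      simp only [DirectSum.toAddMonoid_of, AddMonoidHom.comp_apply, Preadditive.rightComp,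
        AddMonoidHom.mk'_apply, Category.assoc]
      exact piSt.of_comp_shiftFunctorAdd'_hom_inv _ _ y
    | add ξ₁ ξ₂ h₁ h₂ => simp_all

theorem smul_eΛ_one (c : Γ.Λ) : c • Γ.eΛ 1 = Γ.eΛ c := by
  obtain ⟨μ, rfl⟩ := Γ.eΛ.symm.surjective c
  rw [Γ.one_def, AddEquiv.apply_symm_apply]
  induction μ using DirectSum.induction_on with
  | zero => simp
  | of i f =>
    rw [Γ.comp_smul_of, ← shiftFunctorAdd'_eq_shiftFunctorAdd, ← Category.assoc,
      piSt.of_comp_shiftFunctorAdd'_inv _ (zero_add i), shiftFunctorAdd'_zero_add_inv_app]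
    simp
  | add μ₁ μ₂ h₁ h₂ => simp only [map_add, add_smul, h₁, h₂]

def selfEquiv : Γ.Λ ≃ₗ[Γ.Λ] piSt C g g where
  __ := Γ.eΛ
  map_smul' c d := by
    change Γ.eΛ (c * d) = c • Γ.eΛ d
    rw [← Γ.smul_eΛ_one (c * d), ← Γ.smul_eΛ_one d, mul_smul]

theorem mem_range_map_of_lift {X Y : C} {φ : X ⟶ Y} {ξ : piSt C g Y}
    (h : ∀ j, ∃ x : g ⟶ X⟦j⟧, x ≫ φ⟦j⟧' = ξ j) : ξ ∈ LinearMap.range (Γ.map φ) := by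
  classical
  rw [← DirectSum.sum_support_of ξ]
  refine Submodule.sum_mem _ fun j _ => ?_
  obtain ⟨x, hx⟩ := h j
  exact ⟨piSt.of X j x, by rw [map_of, hx]⟩

theorem range_map_le_of_fac {l l' X : C} {u : l ⟶ X} {u' : l' ⟶ X} (f : l ⟶ l')
    (h : f ≫ u' = u) : LinearMap.range (Γ.map u) ≤ LinearMap.range (Γ.map u') := by
  rw [← h, map_comp]
  exact LinearMap.range_comp_le_range _ _

theorem surjective_map_iff {l X : C} (u : l ⟶ X) :
    Function.Surjective (Γ.map u) ↔ IsSurjOnShifts g u := by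
  refine ⟨fun hu i v => ?_, fun hu ξ => Γ.mem_range_map_of_lift fun j => ?_⟩
  · obtain ⟨η, hη⟩ := hu (piSt.of X (-i) (shiftHomEquiv i g X v))
    have hη' : η (-i) ≫ u⟦-i⟧' = shiftHomEquiv i g X v := by
      simpa using congr($hη (-i))
    refine ⟨(shiftHomEquiv i g l).symm (η (-i)), (shiftHomEquiv i g X).injective ?_⟩
    rw [shiftHomEquiv_comp, Equiv.apply_symm_apply, hη']
  · obtain ⟨i, rfl⟩ : ∃ i, j = -i := ⟨-j, (neg_neg j).symm⟩
    obtain ⟨w, hw⟩ := hu i ((shiftHomEquiv i g X).symm (ξ (-i)))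
    exact ⟨shiftHomEquiv i g l w, by rw [← shiftHomEquiv_comp, hw, Equiv.apply_symm_apply]⟩

theorem exact_map_of_lift [∀ n : ℤ, (shiftFunctor C n).Additive] {W X Y : C} (w : W ⟶ X)
    (u : X ⟶ Y) (hwu : w ≫ u = 0)
    (h : ∀ (i : ℤ) (v : g⟦i⟧ ⟶ X), v ≫ u = 0 → ∃ t : g⟦i⟧ ⟶ W, t ≫ w = v) :
    Function.Exact (Γ.map w) (Γ.map u) := by
  intro ξ
  refine ⟨fun hξ => Γ.mem_range_map_of_lift fun j => ?_, ?_⟩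
  · obtain ⟨i, rfl⟩ : ∃ i, j = -i := ⟨-j, (neg_neg j).symm⟩
    have hξu : ξ (-i) ≫ u⟦-i⟧' = 0 := by simpa using congr($hξ (-i))
    obtain ⟨t, ht⟩ := h i ((shiftHomEquiv i g X).symm (ξ (-i))) <|
      (shiftHomEquiv i g Y).injective <| by
        rw [shiftHomEquiv_comp, Equiv.apply_symm_apply, hξu, shiftHomEquiv_zero]
    exact ⟨shiftHomEquiv i g W t, by rw [← shiftHomEquiv_comp, ht, Equiv.apply_symm_apply]⟩
  · rintro ⟨η, rfl⟩
    rw [← LinearMap.comp_apply, ← map_comp, hwu, map_zero, LinearMap.zero_apply]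

abbrev IsFinitelyPresented (X : C) : Prop :=
  Module.FinitePresentation Γ.Λ (piSt C g X)

variable {Γ}

theorem IsFinitelyPresented.of_retract {X Y : C} (s : X ⟶ Y) (r : Y ⟶ X) (hsr : s ≫ r = 𝟙 X)
    (hY : Γ.IsFinitelyPresented Y) : Γ.IsFinitelyPresented X :=
  Module.FinitePresentation.of_retract (Γ.map s) (Γ.map r) (by rw [← map_comp, hsr, map_id])

theorem IsFinitelyPresented.shift {X : C} (hX : Γ.IsFinitelyPresented X) (n : ℤ) :
    Γ.IsFinitelyPresented (X⟦n⟧) :=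
  .of_equiv (Γ.shiftEquiv n X).symm

theorem IsFinitelyPresented.of_shift {X : C} (n : ℤ) (hX : Γ.IsFinitelyPresented (X⟦n⟧)) :
    Γ.IsFinitelyPresented X :=
  .of_equiv (Γ.shiftEquiv n X)

end

variable {C : Type u} [Category.{v} C] [HasZeroObject C] [Preadditive C]
  [HasShift C ℤ] [∀ n : ℤ, (shiftFunctor C n).Additive] [Pretriangulated C]
  {g : C} (Γ : GradedHomData C g)

theorem exact_map_of_distTriang {T : Triangle C} (hT : T ∈ distTriang C) :
    Function.Exact (Γ.map T.mor₁) (Γ.map T.mor₂) :=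
  Γ.exact_map_of_lift _ _ (comp_distTriang_mor_zero₁₂ T hT) fun _ v hv =>
    (T.coyoneda_exact₂ hT v hv).imp fun _ h => h.symm

theorem exists_finBuilds_forall_mem_range {X : C} {ι : Type*} (s : Finset ι)
    (ξ : ι → piSt C g X)
    (h : ∀ i ∈ s, ∃ (l : C) (_ : FinBuilds C g l) (u : l ⟶ X), ξ i ∈ LinearMap.range (Γ.map u)) :
    ∃ (l : C) (_ : FinBuilds C g l) (u : l ⟶ X), ∀ i ∈ s, ξ i ∈ LinearMap.range (Γ.map u) := by
  classical
  induction s using Finset.induction_on with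
  | empty => exact ⟨g, finBuilds_self g, 0, by simp⟩
  | insert a s _ ih =>
    obtain ⟨l₁, hl₁, u₁, hu₁⟩ := h a (Finset.mem_insert_self a s)
    obtain ⟨l₂, hl₂, u₂, hu₂⟩ := ih fun i hi => h i (Finset.mem_insert_of_mem hi)
    refine ⟨l₁ ⊞ l₂, hl₁.biprod hl₂, biprod.desc u₁ u₂, fun i hi => ?_⟩
    rcases Finset.mem_insert.mp hi with rfl | hi
    · exact Γ.range_map_le_of_fac biprod.inl (biprod.inl_desc u₁ u₂) hu₁
    · exact Γ.range_map_le_of_fac biprod.inr (biprod.inr_desc u₁ u₂) (hu₂ i hi)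

theorem exists_finBuilds_of_mem_range {X : C} (j : ℤ) (x : g ⟶ X⟦j⟧) :
    ∃ (l : C) (_ : FinBuilds C g l) (u : l ⟶ X), piSt.of X j x ∈ LinearMap.range (Γ.map u) := by
  obtain ⟨i, rfl⟩ : ∃ i, j = -i := ⟨-j, (neg_neg j).symm⟩
  refine ⟨g⟦i⟧, (finBuilds_self g).shift i, (shiftHomEquiv i g X).symm x,
    piSt.of _ (-i) (shiftHomEquiv i g (g⟦i⟧) (𝟙 _)), ?_⟩
  rw [map_of, ← shiftHomEquiv_comp, Category.id_comp, Equiv.apply_symm_apply]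

theorem exists_finBuilds_mem_range {X : C} (ξ : piSt C g X) :
    ∃ (l : C) (_ : FinBuilds C g l) (u : l ⟶ X), ξ ∈ LinearMap.range (Γ.map u) := by
  classical
  obtain ⟨l, hl, u, hu⟩ := Γ.exists_finBuilds_forall_mem_range ξ.support
    (fun j => piSt.of X j (ξ j)) fun j _ => Γ.exists_finBuilds_of_mem_range j (ξ j)
  refine ⟨l, hl, u, ?_⟩
  rw [← DirectSum.sum_support_of ξ]
  exact Submodule.sum_mem _ hu

theorem exists_finBuilds_surjective_map {X : C} [Module.Finite Γ.Λ (piSt C g X)] :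
    ∃ (l : C) (_ : FinBuilds C g l) (u : l ⟶ X), Function.Surjective (Γ.map u) := by
  obtain ⟨s, hs⟩ := Module.Finite.fg_top (R := Γ.Λ) (M := piSt C g X)
  obtain ⟨l, hl, u, hu⟩ := Γ.exists_finBuilds_forall_mem_range s id fun ξ _ =>
    Γ.exists_finBuilds_mem_range ξ
  refine ⟨l, hl, u, LinearMap.range_eq_top.mp (top_le_iff.mp ?_)⟩
  rw [← hs, Submodule.span_le]
  exact hu

/-- The restriction of `Hom(-, X)` to objects finitely built from `g` is finitely generated
at `c`, uniformly in all `X` with `K^*(g, X)` finitely presented. -/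
def HasSmallCovers (c : C) : Prop :=
  ∀ X : C, Γ.IsFinitelyPresented X →
    ∃ (l : C) (_ : FinBuilds C g l) (u : l ⟶ X), IsSurjOnShifts c u

theorem hasSmallCovers_self : Γ.HasSmallCovers g := fun X hX => by
  obtain ⟨l, hl, u, hu⟩ := Γ.exists_finBuilds_surjective_map (X := X)
  exact ⟨l, hl, u, (Γ.surjective_map_iff u).mp hu⟩

variable {Γ}

theorem IsFinitelyPresented.of_distTriang (hΛ : IsCoherentRing Γ.Λ) {T : Triangle C}
    (hT : T ∈ distTriang C) (h₁ : Γ.IsFinitelyPresented T.obj₁)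
    (h₂ : Γ.IsFinitelyPresented T.obj₂) : Γ.IsFinitelyPresented T.obj₃ :=
  have hT' := rot_of_distTriang _ hT
  have : Γ.IsFinitelyPresented T.rotate.obj₃ := h₁.shift 1
  have : Γ.IsFinitelyPresented T.rotate.rotate.obj₃ := h₂.shift 1
  hΛ.finitePresentation_of_exact (Γ.exact_map_of_distTriang hT)
    (Γ.exact_map_of_distTriang hT') (Γ.exact_map_of_distTriang (rot_of_distTriang _ hT'))

theorem isThickClass_isFinitelyPresented (hΛ : IsCoherentRing Γ.Λ) :
    IsThickClass C Γ.IsFinitelyPresented :=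
  ⟨fun _ _ e h => h.of_retract e.inv e.hom e.inv_hom_id,
   fun n _ h => h.shift n,
   fun _ _ ⟨s, r, hsr⟩ h => h.of_retract s r hsr,
   fun _ hT h₁ h₂ => .of_distTriang hΛ hT h₁ h₂⟩

theorem isFinitelyPresented_of_finBuilds (hΛ : IsCoherentRing Γ.Λ) {X : C}
    (hX : FinBuilds C g X) : Γ.IsFinitelyPresented X :=
  hX _ (isThickClass_isFinitelyPresented hΛ) (.of_equiv Γ.selfEquiv)

theorem HasSmallCovers.of_retract {c c' : C} (s : c ⟶ c') (r : c' ⟶ c) (hsr : s ≫ r = 𝟙 c)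
    (h : Γ.HasSmallCovers c') : Γ.HasSmallCovers c := fun X hX =>
  (h X hX).imp fun _ => .imp fun _ => .imp fun _ hu => hu.of_retract s r hsr

theorem HasSmallCovers.shift {c : C} (h : Γ.HasSmallCovers c) (n : ℤ) :
    Γ.HasSmallCovers (c⟦n⟧) := fun X hX =>
  (h X hX).imp fun _ => .imp fun _ => .imp fun _ hu => hu.shift n

theorem HasSmallCovers.exists_kernel_cover (hΛ : IsCoherentRing Γ.Λ) {c : C}
    (hc : Γ.HasSmallCovers c) {m X : C} (hm : FinBuilds C g m) (hX : Γ.IsFinitelyPresented X)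
    (u : m ⟶ X) :
    ∃ (l : C) (_ : FinBuilds C g l) (w : l ⟶ m), w ≫ u = 0 ∧
      ∀ (i : ℤ) (v : c⟦i⟧ ⟶ m), v ≫ u = 0 → ∃ t : c⟦i⟧ ⟶ l, t ≫ w = v := by
  -- Cover the fibre `K` of `u`, which has finitely presented homotopy by coherence.
  obtain ⟨K, p, _, hT⟩ := distinguished_cocone_triangle₁ u
  have hK : Γ.IsFinitelyPresented K :=
    (IsFinitelyPresented.of_distTriang hΛ (rot_of_distTriang _ hT)
      (isFinitelyPresented_of_finBuilds hΛ hm) hX).of_shift 1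
  have hpu : p ≫ u = 0 := comp_distTriang_mor_zero₁₂ _ hT
  obtain ⟨l, hl, t, ht⟩ := hc K hK
  refine ⟨l, hl, t ≫ p, by rw [Category.assoc, hpu, comp_zero], fun i v hv => ?_⟩
  obtain ⟨v', rfl⟩ : ∃ v' : c⟦i⟧ ⟶ K, v = v' ≫ p := Triangle.coyoneda_exact₂ _ hT v hv
  obtain ⟨τ, rfl⟩ := ht i v'
  exact ⟨τ, (Category.assoc _ _ _).symm⟩

theorem HasSmallCovers.of_distTriang (hΛ : IsCoherentRing Γ.Λ) {T : Triangle C}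
    (hT : T ∈ distTriang C) (h₁ : Γ.HasSmallCovers T.obj₁) (h₂ : Γ.HasSmallCovers T.obj₂) :
    Γ.HasSmallCovers T.obj₃ := by
  intro X hX
  obtain ⟨l₂, hl₂, u₂, hu₂⟩ := h₂ X hX
  obtain ⟨l', hl', w, hwu, hw⟩ := h₁.exists_kernel_cover hΛ hl₂ hX u₂
  obtain ⟨l₃, e, _, hT₃⟩ := distinguished_cocone_triangle w
  have hwe : w ≫ e = 0 := comp_distTriang_mor_zero₁₂ _ hT₃
  obtain ⟨u₃, hu₃⟩ : ∃ u₃ : l₃ ⟶ X, u₂ = e ≫ u₃ := Triangle.yoneda_exact₂ _ hT₃ u₂ hwu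
  obtain ⟨l₁, hl₁, u₁, hu₁⟩ := h₁.shift 1 X hX
  refine ⟨l₃ ⊞ l₁, (hl'.of_distTriang hT₃ hl₂).biprod hl₁, biprod.desc u₃ u₁, fun i v => ?_⟩
  -- Lift `v` along `T.mor₂⟦i⟧` up to an error coming from `T.obj₁⟦1⟧⟦i⟧`, then lift the error.
  obtain ⟨w₂, hw₂⟩ := hu₂ i (T.mor₂⟦i⟧' ≫ v)
  obtain ⟨τ, hτ⟩ := hw i (T.mor₁⟦i⟧' ≫ w₂) <| by
    rw [Category.assoc, hw₂, ← Category.assoc, ← Functor.map_comp,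
      comp_distTriang_mor_zero₁₂ _ hT, Functor.map_zero, zero_comp]
  obtain ⟨V, hV⟩ := T.yoneda_exact₂_shift hT i (w₂ ≫ e) <| by
    rw [← Category.assoc, ← hτ, Category.assoc, hwe, comp_zero]
  obtain ⟨ρ, hρ⟩ := T.yoneda_exact₃_shift hT i (v - V ≫ u₃) <| by
    rw [Preadditive.comp_sub, ← Category.assoc, ← hV, Category.assoc, ← hu₃, hw₂, sub_self]
  obtain ⟨τ₁, hτ₁⟩ := hu₁ i ρ
  refine ⟨biprod.lift V (T.mor₃⟦i⟧' ≫ τ₁), ?_⟩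
  rw [biprod.lift_desc, Category.assoc, hτ₁, ← hρ, add_sub_cancel]

theorem isThickClass_hasSmallCovers (hΛ : IsCoherentRing Γ.Λ) :
    IsThickClass C Γ.HasSmallCovers :=
  ⟨fun _ _ e h => h.of_retract e.inv e.hom e.inv_hom_id,
   fun n _ h => h.shift n,
   fun _ _ ⟨s, r, hsr⟩ h => h.of_retract s r hsr,
   fun _ hT h₁ h₂ => .of_distTriang hΛ hT h₁ h₂⟩

theorem hasSmallCovers_of_finBuilds (hΛ : IsCoherentRing Γ.Λ) {c : C} (hc : FinBuilds C g c) :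
    Γ.HasSmallCovers c :=
  hc _ (isThickClass_hasSmallCovers hΛ) Γ.hasSmallCovers_self

variable (Γ) in
theorem clfp_finBuilds_iff (hΛ : IsCoherentRing Γ.Λ) (X : C) :
    CLFP C (FinBuilds C g) X ↔ Γ.IsFinitelyPresented X := by
  refine ⟨fun ⟨hfg, hker⟩ => ?_, fun hX => ⟨fun c hc => hasSmallCovers_of_finBuilds hΛ hc X hX,
    fun m hm u c hc => (hasSmallCovers_of_finBuilds hΛ hc).exists_kernel_cover hΛ hm hX u⟩⟩
  obtain ⟨l, hl, u, hu⟩ := hfg g (finBuilds_self g)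
  obtain ⟨l', hl', w, hwu, hw⟩ := hker l hl u g (finBuilds_self g)
  have := isFinitelyPresented_of_finBuilds hΛ hl
  have := isFinitelyPresented_of_finBuilds hΛ hl'
  refine Module.finitePresentation_of_surjective (Γ.map u) ((Γ.surjective_map_iff u).mpr hu) ?_
  rw [LinearMap.exact_iff.mp (Γ.exact_map_of_lift w u hwu hw)]
  exact Submodule.fg_range _

end GradedHomData

/-- Here `C` models `D(R)`, `RR` and `kR` are `R` and `k`, `Γ` packages `R_*`, and `aug` is the
map `R_* → k_*` induced by the augmentation `ε`, so that `I_* = ker aug`. -/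
theorem k_clfp_iff_fp_iff_augmentation_ideal_fg
    (C : Type u) [Category.{v} C] [HasZeroObject C] [Preadditive C]
    [HasShift C ℤ] [∀ n : ℤ, (shiftFunctor C n).Additive] [Pretriangulated C]
    (RR kR : C) (ε : RR ⟶ kR)
    (Γ : GradedHomData C RR)
    (aug : Γ.Λ →ₗ[Γ.Λ] piSt C RR kR)
    (haug : ∀ (i : ℤ) (x : RR ⟶ (RR⟦i⟧)),
      aug (Γ.eΛ.symm (DirectSum.of (fun n => RR ⟶ (RR⟦n⟧)) i x))
        = DirectSum.of (fun n => RR ⟶ (kR⟦n⟧)) i (x ≫ (ε⟦i⟧')))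
    (hsurj : Function.Surjective aug)
    (hcoh : IsCoherentRing Γ.Λ) :
    (CLFP C (FinBuilds C RR) kR ↔ IsFPModule Γ.Λ (piSt C RR kR)) ∧
    (IsFPModule Γ.Λ (piSt C RR kR) ↔ (LinearMap.ker aug).FG) := by
  rw [Γ.clfp_finBuilds_iff hcoh, isFPModule_iff_finitePresentation]
  exact ⟨Iff.rfl, (Module.FinitePresentation.fg_ker_iff aug hsurj).symm⟩
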